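/- Let ν ≥ 2, let Ψ be a set of coverings with #Ψ ≥ 2, and let α : Ψ → ℝ satisfy α(ψ) > 0 for every ψ ∈ Ψ. If the weighted RVB polynomial F_α = Σ_{ψ∈Ψ} α(ψ)·F_ψ (a polynomial in ℂ[X_1,…,X_{2ν}] with real coefficients) splits across a nontrivial bipartition (E,E') of Γ_{2ν}, then Ψ is decomposable via E, i.e., ψ(E∩A) = E∩B for every ψ ∈ Ψ. -/

import Mathlib

/-!
`F_α` is homogeneous of degree `ν`. If `F_α = p * q` with the variables of `p` in `E` and those
of `q` outside `E`, then the coefficient of a monomial `m` in `F_α` is the coefficient of its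
`E`-part in `p` times that of its `E'`-part in `q`. So the `E`-part of one monomial of `F_α`
glued to the `E'`-part of another is again a monomial of `F_α`, and homogeneity forces all
monomials of `F_α` to have the same `E`-degree.

Expanding `F_ψ = ∏ (X_{ψ a} - X_a)`, both `∏_a X_a` and the monomial obtained from it by
replacing `X_a` with `X_{ψ a}` occur in `F_α`: every covering contributing to such a monomial
does so with the same sign, so the positive weights cannot cancel. Comparing their `E`-degrees
gives `a ∈ E ↔ ψ a ∈ E`.
-/

open MvPolynomial Finset

noncomputable section

/-- The odd-labelled site `2t−1` of the paper (`t`-th site of sublattice `A`),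
zero-indexed as `2t` in `Fin (2ν)`. -/
def siteA (ν : ℕ) (t : Fin ν) : Fin (2 * ν) := ⟨2 * t.val, by have := t.isLt; omega⟩

/-- The even-labelled site `2t` of the paper (`t`-th site of sublattice `B`),
zero-indexed as `2t+1` in `Fin (2ν)`. -/
def siteB (ν : ℕ) (t : Fin ν) : Fin (2 * ν) := ⟨2 * t.val + 1, by have := t.isLt; omega⟩

/-- A covering is a bijection `ψ : A → B`; it is encoded by the permutation
`σ` of `Fin ν` with `ψ(siteA t) = siteB (σ t)`.  Its covering polynomial is
`F_ψ = ∏_{a∈A} (X_{ψ(a)} − X_a)`. -/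
def covPoly (ν : ℕ) (σ : Equiv.Perm (Fin ν)) : MvPolynomial (Fin (2 * ν)) ℂ :=
  ∏ t : Fin ν, (X (siteB ν (σ t)) - X (siteA ν t))

/-- `F` splits across the bipartition `(E, Eᶜ)`. -/
def SplitsAcross {n : ℕ} (F : MvPolynomial (Fin n) ℂ) (E : Finset (Fin n)) : Prop :=
  ∃ p q : MvPolynomial (Fin n) ℂ, F = p * q ∧ p.vars ⊆ E ∧ q.vars ⊆ Eᶜ

/-- `ψ(E ∩ A) = E ∩ B` for the covering `ψ` encoded by `σ`
(here `E ∩ B` is the set of odd-indexed, i.e. `B`-sublattice, elements of `E`). -/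
def MapsCut (ν : ℕ) (σ : Equiv.Perm (Fin ν)) (E : Finset (Fin (2 * ν))) : Prop :=
  ((Finset.univ.filter (fun t => siteA ν t ∈ E)).image fun t => siteB ν (σ t))
    = E.filter (fun x => x.val % 2 = 1)


/-- The weighted RVB polynomial `F_α = Σ_{ψ∈Ψ} α(ψ)·F_ψ` (real weights, viewed in
`ℂ[X_1,…,X_{2ν}]`). -/
def weightedRvbPoly (ν : ℕ) (Ψ : Finset (Equiv.Perm (Fin ν)))
    (α : Equiv.Perm (Fin ν) → ℝ) : MvPolynomial (Fin (2 * ν)) ℂ :=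
  ∑ σ ∈ Ψ, C ((α σ : ℂ)) * covPoly ν σ

section Splitting

variable {R σ : Type*} [CommSemiring R] [DecidableEq σ] {p q : MvPolynomial σ R} {E : Finset σ}

theorem coeff_mul_eq_coeff_filter_mul_coeff_filter (hp : p.vars ⊆ E) (hq : Disjoint q.vars E)
    (d : σ →₀ ℕ) :
    coeff d (p * q) = coeff (d.filter (· ∈ E)) p * coeff (d.filter (· ∉ E)) q := by
  rw [coeff_mul]
  refine sum_eq_single_of_mem (d.filter (· ∈ E), d.filter (· ∉ E))
    (HasAntidiagonal.mem_antidiagonal.2 (d.filter_add_filter_not (· ∈ E))) ?_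
  rintro ⟨a, b⟩ hab hne
  rw [HasAntidiagonal.mem_antidiagonal] at hab
  by_contra hc
  have ha : a.support ⊆ E := (support_subset_vars_of_mem_support
    (mem_support_iff.2 (left_ne_zero_of_mul hc))).trans hp
  have hb : Disjoint b.support E := hq.mono_left (support_subset_vars_of_mem_support
    (mem_support_iff.2 (right_ne_zero_of_mul hc)))
  have ha' : ∀ i ∉ E, a i = 0 := fun i hi => Finsupp.notMem_support_iff.1 (fun h => hi (ha h))
  have hb' : ∀ i ∈ E, b i = 0 := fun i hi =>
    Finsupp.notMem_support_iff.1 (fun h => disjoint_left.1 hb h hi)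
  refine hne (Prod.ext ?_ ?_) <;> ext i <;> by_cases hi : i ∈ E <;>
    simp [← hab, hi, ha', hb']

theorem degree_filter_eq_of_coeff_ne_zero [NoZeroDivisors R] {n : ℕ} (hp : p.vars ⊆ E)
    (hq : Disjoint q.vars E) (hpq : (p * q).IsHomogeneous n) {d e : σ →₀ ℕ}
    (hd : coeff d (p * q) ≠ 0) (he : coeff e (p * q) ≠ 0) :
    (d.filter (· ∈ E)).degree = (e.filter (· ∈ E)).degree := by
  have hdeg : ∀ {f}, coeff f (p * q) ≠ 0 → f.degree = n := fun hf => by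
    rw [Finsupp.degree_eq_weight_one]; exact hpq hf
  have hdeg_e := hdeg he
  rw [coeff_mul_eq_coeff_filter_mul_coeff_filter hp hq] at hd he
  set m := d.filter (· ∈ E) + e.filter (· ∉ E)
  have hmE : m.filter (· ∈ E) = d.filter (· ∈ E) := by
    ext i; by_cases hi : i ∈ E <;> simp [m, hi]
  have hmE' : m.filter (· ∉ E) = e.filter (· ∉ E) := by
    ext i; by_cases hi : i ∈ E <;> simp [m, hi]
  have hm : coeff m (p * q) ≠ 0 := by
    rw [coeff_mul_eq_coeff_filter_mul_coeff_filter hp hq, hmE, hmE']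
    exact mul_ne_zero (left_ne_zero_of_mul hd) (right_ne_zero_of_mul he)
  have hdeg_m := hdeg hm
  rw [← e.filter_add_filter_not (· ∈ E)] at hdeg_e
  simp only [m, map_add] at hdeg_m hdeg_e
  omega

end Splitting

section ProdXSubX

variable {ι τ R : Type*} [Fintype ι]

def prodXExponent (f : ι → τ) : τ →₀ ℕ := ∑ t, Finsupp.single (f t) 1

theorem prod_X_eq_monomial_prodXExponent [CommSemiring R] (f : ι → τ) :
    ∏ t, (X (f t) : MvPolynomial τ R) = monomial (prodXExponent f) 1 :=
  (monomial_sum_one _ _).symm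

theorem prod_X_sub_X_eq_sum [DecidableEq ι] [CommRing R] (a b : ι → τ) :
    ∏ t, (X (b t) - X (a t) : MvPolynomial τ R) =
      ∑ S : Finset ι, monomial (prodXExponent (S.piecewise a b)) ((-1) ^ #S) := by
  rw [prod_sub, powerset_univ]
  refine sum_congr rfl fun S _ => ?_
  rw [← mul_one ((-1 : R) ^ #S), ← C_mul_monomial, ← prod_X_eq_monomial_prodXExponent,
    ← compl_eq_univ_sdiff, ← prod_mul_prod_compl S, mul_assoc, mul_comm (∏ t ∈ Sᶜ, _), map_pow,
    map_neg, map_one]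
  congr 2 <;> refine prod_congr rfl fun t ht => ?_
  · rw [piecewise_eq_of_mem _ _ _ ht]
  · rw [piecewise_eq_of_notMem _ _ _ (mem_compl.1 ht)]

variable [DecidableEq τ]

theorem prodXExponent_apply (f : ι → τ) (x : τ) : prodXExponent f x = #{t | f t = x} := by
  simp only [prodXExponent, Finsupp.finsetSum_apply, Finsupp.single_apply, card_filter]

theorem prodXExponent_apply_eq_zero_iff {f : ι → τ} {x : τ} :
    prodXExponent f x = 0 ↔ ∀ t, f t ≠ x := by
  simp [prodXExponent_apply, filter_eq_empty_iff]

theorem degree_filter_prodXExponent (f : ι → τ) (E : Finset τ) :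
    ((prodXExponent f).filter (· ∈ E)).degree = #{t | f t ∈ E} := by
  simp only [prodXExponent, Finsupp.filter_sum, map_sum, card_filter]
  refine sum_congr rfl fun t _ => ?_
  split_ifs with h
  · rw [Finsupp.filter_single_of_pos _ h, Finsupp.degree_single]
  · rw [Finsupp.filter_single_of_neg _ h, map_zero]

variable [DecidableEq ι] {a b b' : ι → τ}

theorem prodXExponent_piecewise_apply_eq_zero_iff (ha : Function.Injective a)
    (hb : ∀ s t, a s ≠ b t) (S : Finset ι) (u : ι) :
    prodXExponent (S.piecewise a b) (a u) = 0 ↔ u ∉ S := by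
  rw [prodXExponent_apply_eq_zero_iff]
  refine ⟨fun h hu => h u (piecewise_eq_of_mem _ _ _ hu), fun hu t => ?_⟩
  by_cases ht : t ∈ S
  · rw [piecewise_eq_of_mem _ _ _ ht]
    exact fun h => hu (ha h ▸ ht)
  · rw [piecewise_eq_of_notMem _ _ _ ht]
    exact (hb u t).symm

theorem eq_of_prodXExponent_piecewise_eq (ha : Function.Injective a) (hb : ∀ s t, a s ≠ b t)
    (hb' : ∀ s t, a s ≠ b' t) {S S' : Finset ι}
    (h : prodXExponent (S.piecewise a b) = prodXExponent (S'.piecewise a b')) : S = S' := by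
  ext u
  rw [← not_iff_not, ← prodXExponent_piecewise_apply_eq_zero_iff ha hb,
    ← prodXExponent_piecewise_apply_eq_zero_iff ha hb', h]

theorem coeff_prod_X_sub_X [CommRing R] (ha : Function.Injective a) (hb : ∀ s t, a s ≠ b t)
    (hb' : ∀ s t, a s ≠ b' t) (S : Finset ι) :
    coeff (prodXExponent (S.piecewise a b')) (∏ t, (X (b t) - X (a t)) : MvPolynomial τ R) =
      if prodXExponent (S.piecewise a b) = prodXExponent (S.piecewise a b') then (-1) ^ #S
      else 0 := by
  rw [prod_X_sub_X_eq_sum, coeff_sum, sum_eq_single S]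
  · exact coeff_monomial _ _ _
  · intro S' _ hS'
    rw [coeff_monomial, if_neg (fun h => hS' (eq_of_prodXExponent_piecewise_eq ha hb hb' h))]
  · exact fun h => absurd (mem_univ S) h

end ProdXSubX

theorem card_filter_eq_card_filter_update_iff {ι α : Type*} [Fintype ι] [DecidableEq ι]
    (p : α → Prop) [DecidablePred p] (f : ι → α) (t : ι) (y : α) :
    #{u | p (f u)} = #{u | p (Function.update f t y u)} ↔ (p (f t) ↔ p y) := by
  have htail : ∑ u ∈ {t}ᶜ, (if p (Function.update f t y u) then 1 else 0) =
      ∑ u ∈ {t}ᶜ, if p (f u) then 1 else 0 :=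
    sum_congr rfl fun u hu => by rw [Function.update_of_ne (by simpa using hu)]
  rw [card_filter, card_filter, Fintype.sum_eq_add_sum_compl t, Fintype.sum_eq_add_sum_compl t,
    ← htail, add_left_inj, Function.update_self]
  split_ifs <;> simp_all

section Covering

variable {ν : ℕ}

theorem siteA_injective : Function.Injective (siteA ν) := fun s t h => by
  simp only [siteA, Fin.mk.injEq] at h
  exact Fin.ext (by omega)

theorem siteA_ne_siteB (s t : Fin ν) : siteA ν s ≠ siteB ν t := by
  simp only [siteA, siteB, ne_eq, Fin.mk.injEq]
  omega

theorem coeff_covPoly (σ σ' : Equiv.Perm (Fin ν)) (S : Finset (Fin ν)) :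
    coeff (prodXExponent (S.piecewise (siteA ν) (siteB ν ∘ σ))) (covPoly ν σ') =
      if prodXExponent (S.piecewise (siteA ν) (siteB ν ∘ σ')) =
        prodXExponent (S.piecewise (siteA ν) (siteB ν ∘ σ)) then (-1) ^ #S else 0 :=
  coeff_prod_X_sub_X siteA_injective (fun _ _ => siteA_ne_siteB _ _)
    (fun _ _ => siteA_ne_siteB _ _) S

theorem coeff_weightedRvbPoly_ne_zero {Ψ : Finset (Equiv.Perm (Fin ν))}
    {α : Equiv.Perm (Fin ν) → ℝ} (hα : ∀ σ ∈ Ψ, 0 < α σ) {σ : Equiv.Perm (Fin ν)} (hσ : σ ∈ Ψ)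
    (S : Finset (Fin ν)) :
    coeff (prodXExponent (S.piecewise (siteA ν) (siteB ν ∘ σ))) (weightedRvbPoly ν Ψ α) ≠ 0 := by
  simp only [weightedRvbPoly, coeff_sum, coeff_C_mul, coeff_covPoly, mul_ite, mul_zero,
    ← sum_filter, ← sum_mul, ← Complex.ofReal_sum]
  refine mul_ne_zero (Complex.ofReal_ne_zero.2 (sum_pos (fun σ' h => hα σ' (mem_filter.1 h).1)
    ⟨σ, mem_filter.2 ⟨hσ, ?_⟩⟩).ne') (pow_ne_zero _ (neg_ne_zero.2 one_ne_zero))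
  rfl

theorem isHomogeneous_covPoly (σ : Equiv.Perm (Fin ν)) : (covPoly ν σ).IsHomogeneous ν := by
  have h := IsHomogeneous.prod univ _ (fun _ => 1)
    (fun t _ => (isHomogeneous_X ℂ (siteB ν (σ t))).sub (isHomogeneous_X ℂ (siteA ν t)))
  simp only [sum_const, card_univ, Fintype.card_fin, smul_eq_mul, mul_one] at h
  exact h

theorem isHomogeneous_weightedRvbPoly (Ψ : Finset (Equiv.Perm (Fin ν)))
    (α : Equiv.Perm (Fin ν) → ℝ) : (weightedRvbPoly ν Ψ α).IsHomogeneous ν :=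
  IsHomogeneous.sum _ _ _ fun σ _ => (isHomogeneous_covPoly σ).C_mul _

theorem siteA_mem_iff_siteB_mem_of_splitsAcross {Ψ : Finset (Equiv.Perm (Fin ν))}
    {α : Equiv.Perm (Fin ν) → ℝ} (hα : ∀ σ ∈ Ψ, 0 < α σ) {σ : Equiv.Perm (Fin ν)} (hσ : σ ∈ Ψ)
    {E : Finset (Fin (2 * ν))} (hsplit : SplitsAcross (weightedRvbPoly ν Ψ α) E) (t : Fin ν) :
    siteA ν t ∈ E ↔ siteB ν (σ t) ∈ E := by
  obtain ⟨p, q, hF, hp, hq⟩ := hsplit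
  have hcoeff := coeff_weightedRvbPoly_ne_zero hα hσ
  rw [hF] at hcoeff
  have h := degree_filter_eq_of_coeff_ne_zero hp (subset_compl_iff_disjoint_right.1 hq)
    (hF ▸ isHomogeneous_weightedRvbPoly Ψ α) (hcoeff univ) (hcoeff (univ.erase t))
  rw [piecewise_univ, piecewise_erase_univ, degree_filter_prodXExponent,
    degree_filter_prodXExponent] at h
  exact (card_filter_eq_card_filter_update_iff (· ∈ E) _ t _).1 h

theorem mapsCut_of_forall_siteA_mem_iff {σ : Equiv.Perm (Fin ν)} {E : Finset (Fin (2 * ν))}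
    (h : ∀ t, siteA ν t ∈ E ↔ siteB ν (σ t) ∈ E) : MapsCut ν σ E := by
  ext x
  simp only [mem_image, mem_filter, mem_univ, true_and]
  constructor
  · rintro ⟨u, hu, rfl⟩
    exact ⟨(h u).1 hu, by simp only [siteB]; omega⟩
  · rintro ⟨hxE, hodd⟩
    have hx2 : x.val / 2 < ν := by omega
    have hsx : siteB ν ⟨x.val / 2, hx2⟩ = x := Fin.ext (by simp only [siteB]; omega)
    refine ⟨σ.symm ⟨x.val / 2, hx2⟩, ?_, by rw [Equiv.apply_symm_apply, hsx]⟩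
    rwa [h, Equiv.apply_symm_apply, hsx]

end Covering

theorem stmt_18_general (ν : ℕ) (Ψ : Finset (Equiv.Perm (Fin ν)))
    (α : Equiv.Perm (Fin ν) → ℝ)
    (hα : ∀ σ ∈ Ψ, 0 < α σ)
    (E : Finset (Fin (2 * ν)))
    (hsplit : SplitsAcross (weightedRvbPoly ν Ψ α) E) :
    ∀ σ ∈ Ψ, MapsCut ν σ E := fun _ hσ =>
  mapsCut_of_forall_siteA_mem_iff (siteA_mem_iff_siteB_mem_of_splitsAcross hα hσ hsplit)

/-- Theorem 4.1(iii)(a): for strictly positive weights `α`, if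
the weighted RVB polynomial `F_α` splits across a nontrivial bipartition `(E,E')`,
then `Ψ` is decomposable via `E`, i.e. `ψ(E∩A) = E∩B` for every `ψ ∈ Ψ`. -/
theorem stmt_18 (ν : ℕ) (hν : 2 ≤ ν) (Ψ : Finset (Equiv.Perm (Fin ν)))
    (hΨ : 2 ≤ Ψ.card) (α : Equiv.Perm (Fin ν) → ℝ)
    (hα : ∀ σ ∈ Ψ, 0 < α σ)
    (E : Finset (Fin (2 * ν))) (hE : E.Nonempty) (hE' : E ≠ Finset.univ)
    (hsplit : SplitsAcross (weightedRvbPoly ν Ψ α) E) :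
    ∀ σ ∈ Ψ, MapsCut ν σ E :=
  stmt_18_general ν Ψ α hα E hsplit
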